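/- For all positive integers s, r with r ≥ s ≥ 2 and r > 2s − 2, the minimum n such that every coloring Δ : [1,n] → ℤ admits a subset S₁ that is zero-sum mod s with |S₁| = s and a subset S₂ that is zero-sum mod r with |S₂| = r, satisfying max(S₁) < min(S₂) and diam(S₁) ≤ diam(S₂), equals 2s + 2r − 2. -/

import Mathlib

open Finset

/-- diameter of a finite set of naturals -/
def diam (S : Finset ℕ) : ℕ := (S.max.getD 0) - (S.min.getD 0)

/-- S is monochromatic under a coloring -/
def Mono {α : Type*} (f : ℕ → α) (S : Finset ℕ) : Prop := ∀ a ∈ S, ∀ b ∈ S, f a = f b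

/-- S is zero-sum mod m under an integer coloring -/
def ZeroSum (f : ℕ → ℤ) (m : ℕ) (S : Finset ℕ) : Prop := (m : ℤ) ∣ ∑ x ∈ S, f x

/-- every element of S colored ∞ (= none) -/
def InftyMono (f : ℕ → Option ℤ) (S : Finset ℕ) : Prop := ∀ x ∈ S, f x = none

/-- S consists of ℤ-colored elements and is zero-sum mod m -/
def ZeroSumOpt (f : ℕ → Option ℤ) (m : ℕ) (S : Finset ℕ) : Prop :=
  (∀ x ∈ S, (f x).isSome) ∧ (m : ℤ) ∣ ∑ x ∈ S, (f x).getD 0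

/-!
Upper bound: by Erdős–Ginzburg–Ziv, `[1, 2s-1]` contains a zero-sum `s`-set and
`[2s, 2s+2r-2]` a zero-sum `r`-set; the first has diameter at most `2s-2 ≤ r-1`, while any
`r`-set has diameter at least `r-1`.

Lower bound: under the parity coloring `i ↦ i % 2`, a zero-sum `m`-set contains either `0`
or `m` odd elements, so it has a single parity and diameter at least `2(m-1)`. Hence
`max S₁ ≥ 2s-1`, and `S₂` needs room `[2s, 2s+2r-2]`.
-/

lemma diam_eq_max'_sub_min' {S : Finset ℕ} (h : S.Nonempty) : diam S = S.max' h - S.min' h := by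
  rw [diam, ← coe_max' h, ← coe_min' h]
  rfl

lemma diam_le_of_subset_Icc {S : Finset ℕ} {a b : ℕ} (hS : S ⊆ Icc a b) : diam S ≤ b - a := by
  rcases S.eq_empty_or_nonempty with rfl | h
  · exact (Nat.zero_le _ : 0 ≤ b - a)
  · have hmin := mem_Icc.1 (hS (S.min'_mem h))
    have hmax := mem_Icc.1 (hS (S.max'_mem h))
    rw [diam_eq_max'_sub_min' h]
    omega

lemma card_le_diam_add_one (S : Finset ℕ) : S.card ≤ diam S + 1 := by
  rcases S.eq_empty_or_nonempty with rfl | h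
  · simp
  · calc S.card ≤ (Icc (S.min' h) (S.max' h)).card :=
          card_le_card fun x hx => mem_Icc.2 ⟨S.min'_le x hx, S.le_max' x hx⟩
      _ = diam S + 1 := by
          rw [Nat.card_Icc, diam_eq_max'_sub_min' h]
          have := S.min'_le _ (S.max'_mem h)
          omega

lemma two_mul_card_sub_one_le_diam {S : Finset ℕ} (hS : Mono (· % 2) S) :
    2 * (S.card - 1) ≤ diam S := by
  rcases S.eq_empty_or_nonempty with rfl | h
  · simp
  · set a := S.min' h
    have hcard : S.card ≤ (range (diam S / 2 + 1)).card := by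
      refine card_le_card_of_injOn (fun x => (x - a) / 2) (fun x hx => ?_) fun x hx y hy hxy => ?_
      · have := S.le_max' x hx
        simp only [coe_range, Set.mem_Iio, diam_eq_max'_sub_min' h]
        omega
      · have : x % 2 = y % 2 := hS x hx y hy
        have := S.min'_le x hx
        have := S.min'_le y hy
        simp only at hxy
        omega
    rw [card_range] at hcard
    omega

lemma mono_mod_two_of_zeroSum {m : ℕ} {S : Finset ℕ} (hcard : S.card = m)
    (hS : ZeroSum (fun i => ((i % 2 : ℕ) : ℤ)) m S) : Mono (· % 2) S := by
  set T := S.filter (fun x => x % 2 = 1)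
  have hsum : ∑ x ∈ S, ((x % 2 : ℕ) : ℤ) = (T.card : ℤ) := by
    rw [card_filter, Nat.cast_sum]
    refine sum_congr rfl fun x _ => ?_
    rcases Nat.mod_two_eq_zero_or_one x with h | h <;> simp [h]
  have hdvd : m ∣ T.card := by
    rw [ZeroSum, hsum] at hS
    exact_mod_cast hS
  have hconst : ∃ c, ∀ x ∈ S, x % 2 = c := by
    rcases Nat.eq_zero_or_pos T.card with hT | hT
    · refine ⟨0, fun x hx => ?_⟩
      have : x ∉ T := by simp [card_eq_zero.1 hT]
      simp only [T, mem_filter, not_and] at this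
      exact Nat.mod_two_ne_one.1 (this hx)
    · have hTS : T = S :=
        eq_of_subset_of_card_le (filter_subset _ _) (hcard ▸ Nat.le_of_dvd hT hdvd)
      exact ⟨1, fun x hx => (mem_filter.1 (hTS ▸ hx : x ∈ T)).2⟩
  obtain ⟨c, hc⟩ := hconst
  exact fun a ha b hb => (hc a ha).trans (hc b hb).symm

lemma exists_zeroSum_subset_Icc (f : ℕ → ℤ) (m a : ℕ) :
    ∃ S ⊆ Icc a (a + 2 * m - 2), S.card = m ∧ ZeroSum f m S :=
  Int.erdos_ginzburg_ziv f (by rw [Nat.card_Icc]; omega)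

theorem stmt2_general (s r : ℕ) (hs : 2 ≤ s) (hr : 2 * s - 2 < r) :
    IsLeast {n : ℕ | ∀ Δ : ℕ → ℤ, ∃ S₁ S₂ : Finset ℕ,
    S₁ ⊆ Finset.Icc 1 n ∧ S₂ ⊆ Finset.Icc 1 n ∧
    ZeroSum Δ s S₁ ∧ ZeroSum Δ r S₂ ∧ S₁.card = s ∧ S₂.card = r ∧
    (∀ a ∈ S₁, ∀ b ∈ S₂, a < b) ∧ diam S₁ ≤ diam S₂} (2 * s + 2 * r - 2) := by
  refine ⟨fun Δ => ?_, fun n hn => ?_⟩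
  · obtain ⟨S₁, hS₁, hc₁, hz₁⟩ := exists_zeroSum_subset_Icc Δ s 1
    obtain ⟨S₂, hS₂, hc₂, hz₂⟩ := exists_zeroSum_subset_Icc Δ r (2 * s)
    refine ⟨S₁, S₂, hS₁.trans (Icc_subset_Icc le_rfl (by omega)),
      hS₂.trans (Icc_subset_Icc (by omega) le_rfl), hz₁, hz₂, hc₁, hc₂, fun a ha b hb => ?_, ?_⟩
    · have := mem_Icc.1 (hS₁ ha)
      have := mem_Icc.1 (hS₂ hb)
      omega
    · have := diam_le_of_subset_Icc hS₁
      have := card_le_diam_add_one S₂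
      omega
  · by_contra! hlt
    obtain ⟨S₁, S₂, hS₁, hS₂, hz₁, hz₂, hc₁, hc₂, hlt₁₂, -⟩ := hn fun i => ((i % 2 : ℕ) : ℤ)
    have hne₁ : S₁.Nonempty := card_pos.1 (by omega)
    have hne₂ : S₂.Nonempty := card_pos.1 (by omega)
    have hdiam₁ := two_mul_card_sub_one_le_diam (mono_mod_two_of_zeroSum hc₁ hz₁)
    have hdiam₂ := two_mul_card_sub_one_le_diam (mono_mod_two_of_zeroSum hc₂ hz₂)
    rw [diam_eq_max'_sub_min' hne₁] at hdiam₁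
    rw [diam_eq_max'_sub_min' hne₂] at hdiam₂
    have := mem_Icc.1 (hS₁ (S₁.min'_mem hne₁))
    have := mem_Icc.1 (hS₂ (S₂.max'_mem hne₂))
    have := hlt₁₂ _ (S₁.max'_mem hne₁) _ (S₂.min'_mem hne₂)
    omega

theorem stmt2 (s r : ℕ) (hs : 2 ≤ s) (hsr : s ≤ r) (hr : 2 * s - 2 < r) :
    IsLeast {n : ℕ | ∀ Δ : ℕ → ℤ, ∃ S₁ S₂ : Finset ℕ,
    S₁ ⊆ Finset.Icc 1 n ∧ S₂ ⊆ Finset.Icc 1 n ∧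
    ZeroSum Δ s S₁ ∧ ZeroSum Δ r S₂ ∧ S₁.card = s ∧ S₂.card = r ∧
    (∀ a ∈ S₁, ∀ b ∈ S₂, a < b) ∧ diam S₁ ≤ diam S₂} (2 * s + 2 * r - 2) :=
  stmt2_general s r hs hr
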